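/- arXiv:2102.11369 — 5 statements merged into one kernel-verified Lean document; each statement's English description precedes it below -/
import Mathlib

section
/- If a convex quadrilateral Q is both a trapezoid (has at least one pair of parallel opposite sides) and a midpoint diagonal quadrilateral, then Q is a parallelogram. -/
lemma indep_aux (A B C : ℝ × ℝ) (h : AffineIndependent ℝ ![A, B, C]) {α β : ℝ}
    (hd : α • (C - A) = β • (B - A)) : α = 0 ∧ β = 0 := by
  have hnc : ¬ Collinear ℝ ({A, B, C} : Set (ℝ × ℝ)) :=
    affineIndependent_iff_not_collinear_set.mp h
  have hAB : A ≠ B := by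
    intro he
    exact hnc (by rw [he]; exact (collinear_pair ℝ B C).subset (by simp [Set.insert_subset_iff]))
  by_cases hα : α = 0
  · refine ⟨hα, ?_⟩
    rw [hα, zero_smul] at hd
    rcases smul_eq_zero.mp hd.symm with h0 | h0
    · exact h0
    · exact absurd (sub_eq_zero.mp h0).symm hAB
  · exfalso
    apply hnc
    rw [collinear_iff_of_mem (Set.mem_insert A _)]
    refine ⟨B - A, fun p hp => ?_⟩
    simp only [Set.mem_insert_iff, Set.mem_singleton_iff] at hp
    rcases hp with rfl | rfl | rfl
    · exact ⟨0, by simp⟩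
    · exact ⟨1, by simp⟩
    · refine ⟨β / α, ?_⟩
      have h4 : p - A = (β / α) • (B - A) := by
        rw [div_eq_inv_mul, mul_smul, ← hd, smul_smul, inv_mul_cancel₀ hα, one_smul]
      simp only [vadd_eq_add]
      linear_combination (norm := module) h4

lemma mid_coeff (X Y P : ℝ × ℝ) (hXY : X ≠ Y) {a b : ℝ} (hab : a + b = 1)
    (h : a • X + b • Y = P) (hm : P = midpoint ℝ X Y) : b = 1 / 2 := by
  have ha : a = 1 - b := by linarith
  subst ha
  rw [hm, midpoint_eq_smul_add, invOf_eq_inv] at h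
  have key : (b - 1 / 2) • (Y - X) = 0 := by
    linear_combination (norm := module) h
  rcases smul_eq_zero.mp key with h0 | h0
  · linarith
  · exact absurd (sub_eq_zero.mp h0) (Ne.symm hXY)



/-- `A₁A₂A₃A₄` (in this cyclic order) form a convex quadrilateral: no three
consecutive vertices are collinear and the diagonals cross. -/
def ConvexQuad (A₁ A₂ A₃ A₄ : ℝ × ℝ) : Prop :=
  AffineIndependent ℝ ![A₁, A₂, A₃] ∧ AffineIndependent ℝ ![A₂, A₃, A₄] ∧
  AffineIndependent ℝ ![A₃, A₄, A₁] ∧ AffineIndependent ℝ ![A₄, A₁, A₂] ∧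
  ∃ P : ℝ × ℝ, P ∈ openSegment ℝ A₁ A₃ ∧ P ∈ openSegment ℝ A₂ A₄

/-- Midpoint diagonal quadrilateral: the diagonals intersect at the midpoint of
at least one of the diagonals. -/
def IsMidpointDiagonalQuad (A₁ A₂ A₃ A₄ : ℝ × ℝ) : Prop :=
  ∃ P : ℝ × ℝ, P ∈ openSegment ℝ A₁ A₃ ∧ P ∈ openSegment ℝ A₂ A₄ ∧
    (P = midpoint ℝ A₁ A₃ ∨ P = midpoint ℝ A₂ A₄)

/-- At least one pair of opposite sides is parallel. -/
def IsTrapezoid (A₁ A₂ A₃ A₄ : ℝ × ℝ) : Prop :=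
  (∃ k : ℝ, A₃ - A₄ = k • (A₂ - A₁)) ∨ (∃ k : ℝ, A₄ - A₁ = k • (A₃ - A₂))

/-- Both pairs of opposite sides are parallel. -/
def IsParallelogram (A₁ A₂ A₃ A₄ : ℝ × ℝ) : Prop :=
  (∃ k : ℝ, A₃ - A₄ = k • (A₂ - A₁)) ∧ (∃ k : ℝ, A₄ - A₁ = k • (A₃ - A₂))

theorem stmt6 (A₁ A₂ A₃ A₄ : ℝ × ℝ) (hconv : ConvexQuad A₁ A₂ A₃ A₄)
    (htrap : IsTrapezoid A₁ A₂ A₃ A₄) (hmdq : IsMidpointDiagonalQuad A₁ A₂ A₃ A₄) :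
    IsParallelogram A₁ A₂ A₃ A₄ := by
  obtain ⟨h123, h234, h341, h412, -⟩ := hconv
  obtain ⟨P, ⟨a, b, ha, hb, hab, hP1⟩, ⟨c, d, hc, hd0, hcd, hP2⟩, hmid⟩ := hmdq
  have h13 : A₁ ≠ A₃ := by
    have := h341.injective.ne (show (0 : Fin 3) ≠ 2 by decide)
    simpa [ne_comm] using this
  have h24 : A₂ ≠ A₄ := by
    have := h412.injective.ne (show (0 : Fin 3) ≠ 2 by decide)
    simpa [ne_comm] using this
  have hbd : b = 1/2 ∨ d = 1/2 := by
    rcases hmid with hm | hm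
    · exact Or.inl (mid_coeff A₁ A₃ P h13 hab hP1 hm)
    · exact Or.inr (mid_coeff A₂ A₄ P h24 hcd hP2 hm)
  have ha' : a = 1 - b := by linarith
  have hc' : c = 1 - d := by linarith
  subst ha'; subst hc'
  rcases htrap with ⟨k, hk⟩ | ⟨k, hk⟩
  · -- A₃ - A₄ = k • (A₂ - A₁)
    have key : (b - d) • (A₃ - A₁) = ((1 - d) - d * k) • (A₂ - A₁) := by
      linear_combination (norm := module) hP1 - hP2 - d • hk
    obtain ⟨e1, e2⟩ := indep_aux A₁ A₂ A₃ h123 key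
    have hd2 : d = 1/2 := by rcases hbd with h' | h' <;> linarith
    have hk1 : k = 1 := by rw [hd2] at e2; linarith
    rw [hk1, one_smul] at hk
    exact ⟨⟨1, by rw [one_smul]; exact hk⟩, ⟨1, by rw [one_smul]; linear_combination -hk⟩⟩
  · -- A₄ - A₁ = k • (A₃ - A₂)
    have key : (d - (1 - b)) • (A₄ - A₂) = (b - (1 - b) * k) • (A₃ - A₂) := by
      linear_combination (norm := module) hP2 - hP1 - (1 - b) • hk
    obtain ⟨e1, e2⟩ := indep_aux A₂ A₃ A₄ h234 key
    have hb2 : b = 1/2 := by rcases hbd with h' | h' <;> linarith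
    have hk1 : k = 1 := by rw [hb2] at e2; linarith
    rw [hk1, one_smul] at hk
    exact ⟨⟨1, by rw [one_smul]; linear_combination -hk⟩, ⟨1, by rw [one_smul]; exact hk⟩⟩
end

section
/- For s, t > 0, s + t > 1, s ≠ 1, and q ∈ (0,1), the four points q₁ = (0, qt/((t−s)q + s)), q₂ = ((1−q)s²/((t−1)(s+t)q + s), t(s + q(t−1))/((t−1)(s+t)q + s)), q₃ = ((s + q(t−1))/((s+t−2)q + 1), (1−q)t/((s+t−2)q + 1)), q₄ = (q, 0) all lie on the conic t²x² + (4q²(t−1)t + 2qt(s−t+2) − 2st)xy + ((1−q)s + qt)²y² − 2qt²x − 2qt((1−q)s + qt)y + q²t² = 0. -/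
section InscribedConic

variable {s t q : ℝ}

lemma convex_combination_pos {a b : ℝ} (ha : 0 < a) (hb : 0 < b) (hq0 : 0 ≤ q) (hq1 : q ≤ 1) :
    0 < (1 - q) * a + q * b := by
  simpa using convex_Ioi (0 : ℝ) ha hb (sub_nonneg.2 hq1) hq0 (by ring)

lemma left_tangency_denom_pos (hs : 0 < s) (ht : 0 < t) (hq0 : 0 ≤ q) (hq1 : q ≤ 1) :
    0 < (t - s) * q + s := by
  have hsplit : (t - s) * q + s = (1 - q) * s + q * t := by ring
  exact hsplit ▸ convex_combination_pos hs ht hq0 hq1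

lemma top_tangency_denom_pos (hs : 0 < s) (ht : 0 < t) (hst : 1 < s + t)
    (hq0 : 0 ≤ q) (hq1 : q ≤ 1) : 0 < (t - 1) * (s + t) * q + s := by
  have hsplit : (t - 1) * (s + t) * q + s = (1 - q) * s + q * (t * (s + t - 1)) := by ring
  exact hsplit ▸ convex_combination_pos hs (mul_pos ht (by linarith)) hq0 hq1

lemma right_tangency_denom_pos (hst : 1 < s + t) (hq0 : 0 ≤ q) (hq1 : q ≤ 1) :
    0 < (s + t - 2) * q + 1 := by
  have hsplit : (s + t - 2) * q + 1 = (1 - q) * 1 + q * (s + t - 1) := by ring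
  exact hsplit ▸ convex_combination_pos one_pos (by linarith) hq0 hq1

def inscribedConic (s t q x y : ℝ) : ℝ :=
  t ^ 2 * x ^ 2 + (4 * q ^ 2 * (t - 1) * t + 2 * q * t * (s - t + 2) - 2 * s * t) * x * y +
    ((1 - q) * s + q * t) ^ 2 * y ^ 2 - 2 * q * t ^ 2 * x -
    2 * q * t * ((1 - q) * s + q * t) * y + q ^ 2 * t ^ 2

lemma inscribedConic_left_tangency (h : (t - s) * q + s ≠ 0) :
    inscribedConic s t q 0 (q * t / ((t - s) * q + s)) = 0 := by
  unfold inscribedConic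
  -- Left in place, `field_simp` renormalises the denominator and no longer recognises it from `h`.
  generalize hd : (t - s) * q + s = d at h ⊢
  field_simp
  subst hd
  ring

lemma inscribedConic_top_tangency (h : (t - 1) * (s + t) * q + s ≠ 0) :
    inscribedConic s t q ((1 - q) * s ^ 2 / ((t - 1) * (s + t) * q + s))
      (t * (s + q * (t - 1)) / ((t - 1) * (s + t) * q + s)) = 0 := by
  unfold inscribedConic
  generalize hd : (t - 1) * (s + t) * q + s = d at h ⊢
  field_simp
  subst hd
  ring

lemma inscribedConic_right_tangency (h : (s + t - 2) * q + 1 ≠ 0) :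
    inscribedConic s t q ((s + q * (t - 1)) / ((s + t - 2) * q + 1))
      ((1 - q) * t / ((s + t - 2) * q + 1)) = 0 := by
  unfold inscribedConic
  generalize hd : (s + t - 2) * q + 1 = d at h ⊢
  field_simp
  subst hd
  ring

lemma inscribedConic_bottom_tangency : inscribedConic s t q q 0 = 0 := by
  unfold inscribedConic
  ring

end InscribedConic

theorem stmt9_general (s t q : ℝ) (hs : 0 < s) (ht : 0 < t) (hst : 1 < s + t)
    (hq : q ∈ Set.Ioo (0 : ℝ) 1) :
    let conic : ℝ → ℝ → Prop := fun x y =>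
      t ^ 2 * x ^ 2 + (4 * q ^ 2 * (t - 1) * t + 2 * q * t * (s - t + 2) - 2 * s * t) * x * y +
        ((1 - q) * s + q * t) ^ 2 * y ^ 2 - 2 * q * t ^ 2 * x -
        2 * q * t * ((1 - q) * s + q * t) * y + q ^ 2 * t ^ 2 = 0
    conic 0 (q * t / ((t - s) * q + s)) ∧
    conic ((1 - q) * s ^ 2 / ((t - 1) * (s + t) * q + s))
          (t * (s + q * (t - 1)) / ((t - 1) * (s + t) * q + s)) ∧
    conic ((s + q * (t - 1)) / ((s + t - 2) * q + 1))
          ((1 - q) * t / ((s + t - 2) * q + 1)) ∧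
    conic q 0 := by
  obtain ⟨hq0, hq1⟩ := hq
  exact ⟨inscribedConic_left_tangency (left_tangency_denom_pos hs ht hq0.le hq1.le).ne',
    inscribedConic_top_tangency (top_tangency_denom_pos hs ht hst hq0.le hq1.le).ne',
    inscribedConic_right_tangency (right_tangency_denom_pos hst hq0.le hq1.le).ne',
    inscribedConic_bottom_tangency⟩

theorem stmt9 (s t q : ℝ) (hs : 0 < s) (ht : 0 < t) (hst : 1 < s + t)
    (hs1 : s ≠ 1) (hq : q ∈ Set.Ioo (0 : ℝ) 1) :
    let conic : ℝ → ℝ → Prop := fun x y =>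
      t ^ 2 * x ^ 2 + (4 * q ^ 2 * (t - 1) * t + 2 * q * t * (s - t + 2) - 2 * s * t) * x * y +
        ((1 - q) * s + q * t) ^ 2 * y ^ 2 - 2 * q * t ^ 2 * x -
        2 * q * t * ((1 - q) * s + q * t) * y + q ^ 2 * t ^ 2 = 0
    conic 0 (q * t / ((t - s) * q + s)) ∧
    conic ((1 - q) * s ^ 2 / ((t - 1) * (s + t) * q + s))
          (t * (s + q * (t - 1)) / ((t - 1) * (s + t) * q + s)) ∧
    conic ((s + q * (t - 1)) / ((s + t - 2) * q + 1))
          ((1 - q) * t / ((s + t - 2) * q + 1)) ∧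
    conic q 0 :=
  stmt9_general s t q hs ht hst hq
end

section
/- For s, t > 0, s + t > 1, s ≠ 1, q ∈ (0,1), let q₁ = (0, qt/((t−s)q + s)) and q₂ = ((1−q)s²/((t−1)(s+t)q + s), t(s + q(t−1))/((t−1)(s+t)q + s)). Then the line through q₁ and q₂ is parallel to the line through (0,0) and (s,t) if and only if s + t = 2. -/
/-! Parallelism of `q₂ - q₁` with `(s, t)` is the vanishing of their cross product. After dividing
by `s t`, this says `q / D₁ = q (s + t - 1) / D₂` for the denominators `D₁`, `D₂` of `q₁`, `q₂`, and
`D₂ - (s + t - 1) D₁ = -(1 - q) s (s + t - 2)`. Both denominators are positive: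
`D₁ = (1 - q) s + q t` and `D₂ = (1 - q) s + q t (s + t - 1)`. -/

theorem Prod.exists_smul_eq_iff_mul_eq_mul {K : Type*} [Field K] {w v : K × K} (hv : v ≠ 0) :
    (∃ k : K, w = k • v) ↔ w.1 * v.2 = w.2 * v.1 := by
  obtain ⟨v₁, v₂⟩ := v
  obtain ⟨w₁, w₂⟩ := w
  constructor
  · rintro ⟨k, hk⟩
    simp only [Prod.smul_mk, smul_eq_mul, Prod.mk.injEq] at hk ⊢
    rw [hk.1, hk.2]
    ring
  · intro h
    simp only [Prod.smul_mk, smul_eq_mul, Prod.mk.injEq] at h ⊢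
    by_cases h₁ : v₁ = 0
    · have h₂ : v₂ ≠ 0 := fun h₂ => hv (by rw [h₁, h₂]; rfl)
      subst h₁
      refine ⟨w₂ / v₂, ?_, by field_simp⟩
      field_simp
      simpa using h
    · refine ⟨w₁ / v₁, by field_simp, ?_⟩
      field_simp
      linear_combination -h

theorem tangency_cross_eq {s t q : ℝ} (h₁ : (t - s) * q + s ≠ 0)
    (h₂ : (t - 1) * (s + t) * q + s ≠ 0) :
    (t * (s + q * (t - 1)) / ((t - 1) * (s + t) * q + s) - q * t / ((t - s) * q + s)) * s
        - (1 - q) * s ^ 2 / ((t - 1) * (s + t) * q + s) * t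
      = s ^ 2 * t * q * (1 - q) * (s + t - 2) / (((t - s) * q + s) * ((t - 1) * (s + t) * q + s)) := by
  rw [div_sub_div _ _ h₂ h₁, div_mul_eq_mul_div, div_mul_eq_mul_div,
    div_sub_div _ _ (mul_ne_zero h₂ h₁) h₂,
    div_eq_div_iff (mul_ne_zero (mul_ne_zero h₂ h₁) h₂) (mul_ne_zero h₁ h₂)]
  ring

theorem stmt10_general (s t q : ℝ) (hs : 0 < s) (ht : 0 < t) (hst : 1 < s + t)
    (hq : q ∈ Set.Ioo (0 : ℝ) 1) :
    let q₁ : ℝ × ℝ := (0, q * t / ((t - s) * q + s))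
    let q₂ : ℝ × ℝ := ((1 - q) * s ^ 2 / ((t - 1) * (s + t) * q + s),
                       t * (s + q * (t - 1)) / ((t - 1) * (s + t) * q + s))
    -- the line through q₁ and q₂ is parallel to the line through (0,0) and (s,t)
    (∃ k : ℝ, q₂ - q₁ = k • ((s, t) : ℝ × ℝ)) ↔ s + t = 2 := by
  obtain ⟨hq₀, hq₁⟩ := hq
  intro q₁ q₂
  have hD₁ : 0 < (t - s) * q + s := by nlinarith
  have hD₂ : 0 < (t - 1) * (s + t) * q + s := by
    have : 0 < t * (s + t - 1) := mul_pos ht (by linarith)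
    nlinarith
  have hv : ((s, t) : ℝ × ℝ) ≠ 0 := fun h => hs.ne' (congrArg Prod.fst h)
  rw [Prod.exists_smul_eq_iff_mul_eq_mul hv, eq_comm, ← sub_eq_zero]
  simp only [q₁, q₂, Prod.fst_sub, Prod.snd_sub, sub_zero]
  have hc : s ^ 2 * t * q * (1 - q) ≠ 0 := by
    have : 0 < 1 - q := by linarith
    positivity
  rw [tangency_cross_eq hD₁.ne' hD₂.ne', div_eq_zero_iff, mul_eq_zero, sub_eq_zero]
  simp [hc, hD₁.ne', hD₂.ne']

theorem stmt10 (s t q : ℝ) (hs : 0 < s) (ht : 0 < t) (hst : 1 < s + t)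
    (hs1 : s ≠ 1) (hq : q ∈ Set.Ioo (0 : ℝ) 1) :
    let q₁ : ℝ × ℝ := (0, q * t / ((t - s) * q + s))
    let q₂ : ℝ × ℝ := ((1 - q) * s ^ 2 / ((t - 1) * (s + t) * q + s),
                       t * (s + q * (t - 1)) / ((t - 1) * (s + t) * q + s))
    -- the line through q₁ and q₂ is parallel to the line through (0,0) and (s,t)
    (∃ k : ℝ, q₂ - q₁ = k • ((s, t) : ℝ × ℝ)) ↔ s + t = 2 :=
  stmt10_general s t q hs ht hst hq
end

section
/- Let Q be a convex quadrilateral that is not a midpoint diagonal quadrilateral. Then no ellipse inscribed in Q has a pair of conjugate diameters parallel to the two diagonals of Q. -/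
/-- The unit circle. -/
def unitCircle : Set (ℝ × ℝ) := {p : ℝ × ℝ | p.1 ^ 2 + p.2 ^ 2 = 1}

/-- The ellipse `f '' unitCircle` (with center `f 0`) is inscribed in the
quadrilateral `A₁A₂A₃A₄`: it lies inside the quadrilateral and touches each
of the four sides. -/
def InscribedEllipse (f : (ℝ × ℝ) ≃ᵃ[ℝ] (ℝ × ℝ)) (A₁ A₂ A₃ A₄ : ℝ × ℝ) : Prop :=
  f '' unitCircle ⊆ convexHull ℝ {A₁, A₂, A₃, A₄} ∧
  (∃ p ∈ f '' unitCircle, p ∈ segment ℝ A₁ A₂) ∧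
  (∃ p ∈ f '' unitCircle, p ∈ segment ℝ A₂ A₃) ∧
  (∃ p ∈ f '' unitCircle, p ∈ segment ℝ A₃ A₄) ∧
  (∃ p ∈ f '' unitCircle, p ∈ segment ℝ A₄ A₁)

/-- The diameters of the ellipse `S` with center `c` in the directions `u` and
`v` are conjugate: the midpoint of every chord of `S` parallel to `u` lies on
the line through `c` with direction `v`. -/
def ConjugateDiameters (S : Set (ℝ × ℝ)) (c u v : ℝ × ℝ) : Prop :=
  u ≠ 0 ∧ v ≠ 0 ∧
    ∀ p q, p ∈ S → q ∈ S → p ≠ q → (∃ t : ℝ, p - q = t • u) →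
      ∃ t : ℝ, midpoint ℝ p q = c + t • v


/-!
Pull everything back by `f⁻¹` and measure with the Euclidean norm: the ellipse becomes the unit
circle, inscribed in a convex quadrilateral `B₁B₂B₃B₄`, and since conjugate diameters of a circle
are perpendicular, the diagonals become orthogonal. Every side is a supporting line touching the
circle, so with the tangent lengths `tᵢ = √(‖Bᵢ‖² - 1)` the sides are `tᵢ + tᵢ₊₁`. Orthogonal
diagonals give `|B₁B₂|² + |B₃B₄|² = |B₂B₃|² + |B₄B₁|²`, i.e. `(t₁ - t₃)(t₂ - t₄) = 0`: the
quadrilateral is a kite, and the diagonal through its apexes lies on the perpendicular bisector of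
the other one, which it therefore cuts at its midpoint. Affine maps preserve midpoints.
-/

open Metric
open scoped RealInnerProductSpace

section Module

variable {M N : Type*} [AddCommGroup M] [Module ℝ M] [AddCommGroup N] [Module ℝ N]

def IsInscribed (S : Set M) (A₁ A₂ A₃ A₄ : M) : Prop :=
  S ⊆ convexHull ℝ {A₁, A₂, A₃, A₄} ∧
  (∃ p ∈ S, p ∈ segment ℝ A₁ A₂) ∧ (∃ p ∈ S, p ∈ segment ℝ A₂ A₃) ∧
  (∃ p ∈ S, p ∈ segment ℝ A₃ A₄) ∧ (∃ p ∈ S, p ∈ segment ℝ A₄ A₁)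

lemma inscribedEllipse_iff {f : (ℝ × ℝ) ≃ᵃ[ℝ] (ℝ × ℝ)} {A₁ A₂ A₃ A₄ : ℝ × ℝ} :
    InscribedEllipse f A₁ A₂ A₃ A₄ ↔ IsInscribed (f '' unitCircle) A₁ A₂ A₃ A₄ :=
  Iff.rfl

lemma IsInscribed.image {S : Set M} {A₁ A₂ A₃ A₄ : M} (ψ : M →ᵃ[ℝ] N)
    (h : IsInscribed S A₁ A₂ A₃ A₄) : IsInscribed (ψ '' S) (ψ A₁) (ψ A₂) (ψ A₃) (ψ A₄) := by
  obtain ⟨hsub, h₁, h₂, h₃, h₄⟩ := h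
  have side {B C : M} (h : ∃ p ∈ S, p ∈ segment ℝ B C) :
      ∃ p ∈ ψ '' S, p ∈ segment ℝ (ψ B) (ψ C) := by
    obtain ⟨p, hp, hpBC⟩ := h
    exact ⟨ψ p, Set.mem_image_of_mem ψ hp, image_segment ℝ ψ B C ▸ Set.mem_image_of_mem ψ hpBC⟩
  refine ⟨?_, side h₁, side h₂, side h₃, side h₄⟩
  refine (Set.image_mono hsub).trans ?_
  simp [ψ.image_convexHull, Set.image_insert_eq]

lemma AffineIndependent.map_affineEquiv₃ {a b c : M} (ψ : M ≃ᵃ[ℝ] N)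
    (h : AffineIndependent ℝ ![a, b, c]) : AffineIndependent ℝ ![ψ a, ψ b, ψ c] := by
  rw [← ψ.affineIndependent_iff] at h
  convert h using 1
  ext i; fin_cases i <;> rfl

end Module

section InnerProductSpace

variable {E : Type*} [NormedAddCommGroup E] [InnerProductSpace ℝ E]

lemma inner_eq_one_of_sphere_subset_halfSpace {n z B : E} {c : ℝ} (hn : n ≠ 0)
    (hsub : sphere (0 : E) 1 ⊆ {w | ⟪n, w⟫ ≤ c}) (hz : ‖z‖ = 1) (hnz : ⟪n, z⟫ = c)
    (hnB : ⟪n, B⟫ = c) : ⟪z, B⟫ = 1 := by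
  have hn' : 0 < ‖n‖ := norm_pos_iff.mpr hn
  set m := ‖n‖⁻¹ • n
  have hm : ‖m‖ = 1 := by simp [m, norm_smul, hn'.ne']
  have hc : ‖n‖ ≤ c := by
    have := hsub (mem_sphere_zero_iff_norm.mpr hm)
    simpa [m, real_inner_smul_right, real_inner_self_eq_norm_sq, field] using this
  have hmz : ⟪m, z⟫ = 1 := by
    refine le_antisymm (by simpa [hm, hz] using real_inner_le_norm m z) ?_
    rw [real_inner_smul_left, hnz]
    exact (one_le_inv_mul₀ hn').mpr hc
  have hzm : z = m := ((inner_eq_one_iff_of_norm_eq_one hm hz).mp hmz).symm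
  have hcn : c = ‖n‖ := by
    rw [real_inner_smul_left, hnz] at hmz
    field_simp at hmz; linarith
  rw [hzm, real_inner_smul_left, hnB, hcn, inv_mul_cancel₀ hn'.ne']

lemma exists_inner_ne_zero_of_affineIndependent {V W S : E}
    (h : AffineIndependent ℝ ![V, W, S]) : ∃ n : E, ⟪n, W - V⟫ = 0 ∧ ⟪n, S - V⟫ ≠ 0 := by
  by_contra! hperp
  have hmem : S - V ∈ (ℝ ∙ (W - V))ᗮᗮ := by
    rw [Submodule.mem_orthogonal]
    intro n hn
    exact hperp n ((Submodule.mem_orthogonal_singleton_iff_inner_left).mp hn)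
  rw [Submodule.orthogonal_orthogonal, Submodule.mem_span_singleton] at hmem
  obtain ⟨r, hr⟩ := hmem
  rw [affineIndependent_iff_not_collinear_set] at h
  apply h
  have hS : S ∈ line[ℝ, V, W] := by
    convert AffineMap.lineMap_mem_affineSpan_pair r V W using 1
    rw [AffineMap.lineMap_apply, vsub_eq_sub, hr, vadd_eq_add, sub_add_cancel]
  rw [Set.insert_comm, Set.pair_comm, Set.insert_comm,
    collinear_insert_iff_of_mem_affineSpan (by rwa [Set.pair_comm])]
  exact collinear_pair ℝ W V

lemma exists_supporting_inner_of_mem_openSegment {V W S T P : E}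
    (h : AffineIndependent ℝ ![V, W, S]) (hVS : P ∈ openSegment ℝ V S)
    (hWT : P ∈ openSegment ℝ W T) :
    ∃ n : E, n ≠ 0 ∧ ⟪n, W⟫ = ⟪n, V⟫ ∧ ⟪n, S⟫ ≤ ⟪n, V⟫ ∧ ⟪n, T⟫ ≤ ⟪n, V⟫ := by
  obtain ⟨n₀, hW, hS⟩ := exists_inner_ne_zero_of_affineIndependent h
  -- the sign puts `S` strictly on the negative side of the line `VW`
  set n := -⟪n₀, S - V⟫ • n₀
  have hnW : ⟪n, W - V⟫ = 0 := by simp [n, real_inner_smul_left, hW]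
  have hnS : ⟪n, S - V⟫ < 0 := by
    simp only [n, real_inner_smul_left]
    nlinarith [sq_pos_of_ne_zero hS]
  rw [openSegment_eq_image'] at hVS hWT
  obtain ⟨a, ⟨ha, -⟩, rfl⟩ := hVS
  obtain ⟨b, ⟨hb, -⟩, hP⟩ := hWT
  have hnT : ⟪n, T - W⟫ < 0 := by
    have := congrArg (⟪n, ·⟫) hP
    simp only [inner_add_right, inner_smul_right] at this
    rw [inner_sub_right] at hnW
    nlinarith
  refine ⟨n, fun h0 => by simp [h0] at hnS, ?_, ?_, ?_⟩ <;>
    simp only [inner_sub_right] at hnW hnS hnT <;> linarith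

/-- `⟪z, ·⟫ = 1` is the tangent hyperplane of the unit sphere at `z`. -/
def IsTangentAt (B C z : E) : Prop :=
  ‖z‖ = 1 ∧ z ∈ segment ℝ B C ∧ ⟪z, B⟫ = 1 ∧ ⟪z, C⟫ = 1

lemma isTangentAt_of_mem_segment {V W S T P z : E}
    (hsub : sphere (0 : E) 1 ⊆ convexHull ℝ {V, W, S, T}) (h : AffineIndependent ℝ ![V, W, S])
    (hVS : P ∈ openSegment ℝ V S) (hWT : P ∈ openSegment ℝ W T) (hz : z ∈ sphere (0 : E) 1)
    (hzVW : z ∈ segment ℝ V W) : IsTangentAt V W z := by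
  obtain ⟨n, hn, hW, hS, hT⟩ := exists_supporting_inner_of_mem_openSegment h hVS hWT
  have hhalf : sphere (0 : E) 1 ⊆ {w | ⟪n, w⟫ ≤ ⟪n, V⟫} := by
    refine hsub.trans (convexHull_min ?_ (convex_halfSpace_le (innerₛₗ ℝ n).isLinear _))
    rintro x (rfl | rfl | rfl | rfl) <;> simp_all
  have hnz : ⟪n, z⟫ = ⟪n, V⟫ :=
    (convex_hyperplane (innerₛₗ ℝ n).isLinear _).segment_subset rfl hW hzVW
  rw [mem_sphere_zero_iff_norm] at hz
  exact ⟨hz, hzVW, inner_eq_one_of_sphere_subset_halfSpace hn hhalf hz hnz rfl,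
    inner_eq_one_of_sphere_subset_halfSpace hn hhalf hz hnz hW⟩

lemma dist_eq_sqrt_add_sqrt_of_isTangentAt {B C z : E} (h : IsTangentAt B C z) :
    dist B C = √(‖B‖ ^ 2 - 1) + √(‖C‖ ^ 2 - 1) := by
  obtain ⟨hz, hseg, hB, hC⟩ := h
  have tangent_length {X : E} (hX : ⟪z, X⟫ = 1) : dist X z = √(‖X‖ ^ 2 - 1) := by
    rw [dist_eq_norm, ← Real.sqrt_sq (norm_nonneg _), norm_sub_sq_real, real_inner_comm, hX, hz]
    ring_nf
  rw [← dist_add_dist_of_mem_segment hseg, tangent_length hB, dist_comm, tangent_length hC]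

lemma dist_sq_add_dist_sq_eq_of_inner_eq_zero {B₁ B₂ B₃ B₄ : E}
    (h : ⟪B₃ - B₁, B₄ - B₂⟫ = 0) :
    dist B₁ B₂ ^ 2 + dist B₃ B₄ ^ 2 = dist B₂ B₃ ^ 2 + dist B₄ B₁ ^ 2 := by
  simp only [dist_eq_norm, norm_sub_sq_real]
  simp only [inner_sub_left, inner_sub_right] at h
  linarith [real_inner_comm B₂ B₃, real_inner_comm B₄ B₃, real_inner_comm B₁ B₂, real_inner_comm B₁ B₄]

lemma dist_eq_or_dist_eq_of_isTangentAt {B₁ B₂ B₃ B₄ z₁ z₂ z₃ z₄ : E}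
    (h₁ : IsTangentAt B₁ B₂ z₁) (h₂ : IsTangentAt B₂ B₃ z₂) (h₃ : IsTangentAt B₃ B₄ z₃)
    (h₄ : IsTangentAt B₄ B₁ z₄) (hperp : ⟪B₃ - B₁, B₄ - B₂⟫ = 0) :
    dist B₁ B₂ = dist B₂ B₃ ∨ dist B₁ B₂ = dist B₄ B₁ := by
  have hsq := dist_sq_add_dist_sq_eq_of_inner_eq_zero hperp
  simp only [dist_eq_sqrt_add_sqrt_of_isTangentAt h₁, dist_eq_sqrt_add_sqrt_of_isTangentAt h₂,
    dist_eq_sqrt_add_sqrt_of_isTangentAt h₃, dist_eq_sqrt_add_sqrt_of_isTangentAt h₄] at hsq ⊢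
  set t₁ := √(‖B₁‖ ^ 2 - 1)
  set t₂ := √(‖B₂‖ ^ 2 - 1)
  set t₃ := √(‖B₃‖ ^ 2 - 1)
  set t₄ := √(‖B₄‖ ^ 2 - 1)
  have : (t₁ - t₃) * (t₂ - t₄) = 0 := by linear_combination hsq / 2
  rcases mul_eq_zero.mp this with h | h
  · left; linear_combination h
  · right; linear_combination h

lemma eq_midpoint_of_inner_eq_zero_of_dist_eq {B₁ B₂ B₃ B₄ P : E}
    (h₁₃ : P ∈ segment ℝ B₁ B₃) (h₂₄ : P ∈ segment ℝ B₂ B₄) (hperp : ⟪B₃ - B₁, B₄ - B₂⟫ = 0)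
    (hdist : dist B₂ B₁ = dist B₂ B₃) : P = midpoint ℝ B₁ B₃ := by
  have hB₂ : B₂ ∈ AffineSubspace.perpBisector B₁ B₃ :=
    AffineSubspace.mem_perpBisector_iff_dist_eq.mpr hdist
  have hP : P ∈ AffineSubspace.perpBisector B₁ B₃ := by
    rw [segment_eq_image'] at h₂₄
    obtain ⟨r, -, rfl⟩ := h₂₄
    rw [AffineSubspace.mem_perpBisector_iff_inner_eq_zero, vsub_eq_sub, vsub_eq_sub] at hB₂ ⊢
    rw [add_sub_right_comm, inner_add_left, hB₂, real_inner_smul_left, real_inner_comm, hperp]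
    simp
  have hPdist := AffineSubspace.mem_perpBisector_iff_dist_eq.mp hP
  have hsum := dist_add_dist_of_mem_segment h₁₃
  apply eq_midpoint_of_dist_eq_half <;> linarith [dist_comm P B₁]

theorem eq_midpoint_or_eq_midpoint_of_isInscribed {B₁ B₂ B₃ B₄ P : E}
    (h₁₂₃ : AffineIndependent ℝ ![B₁, B₂, B₃]) (h₂₃₄ : AffineIndependent ℝ ![B₂, B₃, B₄])
    (h₃₄₁ : AffineIndependent ℝ ![B₃, B₄, B₁]) (h₄₁₂ : AffineIndependent ℝ ![B₄, B₁, B₂])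
    (h₁₃ : P ∈ openSegment ℝ B₁ B₃) (h₂₄ : P ∈ openSegment ℝ B₂ B₄)
    (hins : IsInscribed (sphere (0 : E) 1) B₁ B₂ B₃ B₄) (hperp : ⟪B₃ - B₁, B₄ - B₂⟫ = 0) :
    P = midpoint ℝ B₁ B₃ ∨ P = midpoint ℝ B₂ B₄ := by
  obtain ⟨hsub, ⟨z₁, hz₁, hs₁⟩, ⟨z₂, hz₂, hs₂⟩, ⟨z₃, hz₃, hs₃⟩, ⟨z₄, hz₄, hs₄⟩⟩ := hins
  have hrot (a b c d : E) : ({a, b, c, d} : Set E) = {b, c, d, a} := by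
    ext; simp only [Set.mem_insert_iff, Set.mem_singleton_iff]; tauto
  have h₃₁ := openSegment_symm ℝ B₁ B₃ ▸ h₁₃
  have h₄₂ := openSegment_symm ℝ B₂ B₄ ▸ h₂₄
  have t₁ := isTangentAt_of_mem_segment hsub h₁₂₃ h₁₃ h₂₄ hz₁ hs₁
  rw [hrot] at hsub
  have t₂ := isTangentAt_of_mem_segment hsub h₂₃₄ h₂₄ h₃₁ hz₂ hs₂
  rw [hrot] at hsub
  have t₃ := isTangentAt_of_mem_segment hsub h₃₄₁ h₃₁ h₄₂ hz₃ hs₃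
  rw [hrot] at hsub
  have t₄ := isTangentAt_of_mem_segment hsub h₄₁₂ h₄₂ h₁₃ hz₄ hs₄
  have s₁₃ := openSegment_subset_segment ℝ B₁ B₃ h₁₃
  have s₂₄ := openSegment_subset_segment ℝ B₂ B₄ h₂₄
  rcases dist_eq_or_dist_eq_of_isTangentAt t₁ t₂ t₃ t₄ hperp with h | h
  · exact .inl (eq_midpoint_of_inner_eq_zero_of_dist_eq s₁₃ s₂₄ hperp (by rwa [dist_comm]))
  · refine .inr (eq_midpoint_of_inner_eq_zero_of_dist_eq s₂₄ s₁₃ ?_ (by rwa [dist_comm B₁ B₄]))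
    rwa [real_inner_comm]

end InnerProductSpace

lemma toLp_mem_sphere_iff {p : ℝ × ℝ} :
    WithLp.toLp 2 p ∈ sphere (0 : WithLp 2 (ℝ × ℝ)) 1 ↔ p ∈ unitCircle := by
  rw [mem_sphere_zero_iff_norm, WithLp.prod_norm_eq_of_L2, Real.sqrt_eq_one]
  simp [unitCircle]

lemma image_toLp_unitCircle : WithLp.toLp 2 '' unitCircle = sphere (0 : WithLp 2 (ℝ × ℝ)) 1 := by
  ext x
  exact ⟨fun ⟨p, hp, hx⟩ => hx ▸ toLp_mem_sphere_iff.mpr hp,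
    fun hx => ⟨WithLp.ofLp x, toLp_mem_sphere_iff.mp hx, rfl⟩⟩

lemma ConjugateDiameters.map {S : Set (ℝ × ℝ)} {c u v : ℝ × ℝ}
    (g : (ℝ × ℝ) ≃ᵃ[ℝ] (ℝ × ℝ)) (h : ConjugateDiameters S c u v) :
    ConjugateDiameters (g '' S) (g c) (g.linear u) (g.linear v) := by
  obtain ⟨hu, hv, hmid⟩ := h
  refine ⟨by simpa using hu, by simpa using hv, ?_⟩
  rintro _ _ ⟨p, hp, rfl⟩ ⟨q, hq, rfl⟩ hpq ⟨t, ht⟩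
  have hsub : g p - g q = g.linear (p - q) := (g.toAffineMap.linearMap_vsub p q).symm
  obtain ⟨s, hs⟩ := hmid p q hp hq (ne_of_apply_ne g hpq)
    ⟨t, g.linear.injective (by rw [← hsub, ht, map_smul])⟩
  refine ⟨s, ?_⟩
  rw [← g.map_midpoint, hs, add_comm, ← vadd_eq_add, g.map_vadd, vadd_eq_add, map_smul, add_comm]

lemma ConjugateDiameters.inner_toLp_eq_zero {d e : ℝ × ℝ}
    (h : ConjugateDiameters unitCircle 0 d e) : ⟪WithLp.toLp 2 d, WithLp.toLp 2 e⟫ = 0 := by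
  obtain ⟨hd, -, hmid⟩ := h
  have hd₀ : 0 < d.1 ^ 2 + d.2 ^ 2 := by
    by_contra! h
    apply hd
    ext <;> simp only [Prod.fst_zero, Prod.snd_zero] <;> nlinarith [sq_nonneg d.1, sq_nonneg d.2]
  -- the chord from `(-d + d⊥) / r` to `(d + d⊥) / r` is parallel to `d` with midpoint `d⊥ / r`
  set r := √(2 * (d.1 ^ 2 + d.2 ^ 2))
  have hr : 0 < r := Real.sqrt_pos.mpr (by positivity)
  have hr2 : r ^ 2 = 2 * (d.1 ^ 2 + d.2 ^ 2) := Real.sq_sqrt (by positivity)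
  set p : ℝ × ℝ := r⁻¹ • (d.1 - d.2, d.2 + d.1)
  set q : ℝ × ℝ := r⁻¹ • (-d.1 - d.2, -d.2 + d.1)
  have hpq : p - q = (2 / r) • d := by
    ext <;> simp [p, q] <;> field_simp <;> ring
  have hp : p ∈ unitCircle := by
    simp only [unitCircle, Set.mem_ofPred_eq, p, Prod.smul_fst, Prod.smul_snd, smul_eq_mul]
    field_simp; linear_combination -hr2
  have hq : q ∈ unitCircle := by
    simp only [unitCircle, Set.mem_ofPred_eq, q, Prod.smul_fst, Prod.smul_snd, smul_eq_mul]
    field_simp; linear_combination -hr2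
  have hne : p ≠ q := by
    rw [← sub_ne_zero, hpq]
    exact smul_ne_zero (by positivity) hd
  obtain ⟨t, ht⟩ := hmid p q hp hq hne ⟨2 / r, hpq⟩
  rw [midpoint_eq_smul_add, zero_add] at ht
  have h₁ := congrArg Prod.fst ht
  have h₂ := congrArg Prod.snd ht
  simp only [p, q, Prod.smul_fst, Prod.smul_snd, Prod.fst_add, Prod.snd_add, smul_eq_mul,
    invOf_eq_inv] at h₁ h₂
  have ht : t ≠ 0 := by
    rintro rfl
    have : r⁻¹ * (d.1 ^ 2 + d.2 ^ 2) = 0 := by linear_combination d.1 * h₂ - d.2 * h₁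
    exact (mul_pos (inv_pos.mpr hr) hd₀).ne' this
  have key : t * (d.1 * e.1 + d.2 * e.2) = 0 := by linear_combination -d.1 * h₁ - d.2 * h₂
  simpa [ht, mul_comm] using key

/-- `ℝ × ℝ` carries the sup norm; in `WithLp 2 (ℝ × ℝ)` the pulled-back ellipse is the Euclidean
unit circle. -/
noncomputable def circleFrame (f : (ℝ × ℝ) ≃ᵃ[ℝ] (ℝ × ℝ)) : (ℝ × ℝ) ≃ᵃ[ℝ] WithLp 2 (ℝ × ℝ) :=
  f.symm.trans (WithLp.linearEquiv 2 ℝ (ℝ × ℝ)).symm.toAffineEquiv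

section CircleFrame

variable (f : (ℝ × ℝ) ≃ᵃ[ℝ] (ℝ × ℝ)) {A₁ A₂ A₃ A₄ : ℝ × ℝ}

@[simp]
lemma circleFrame_apply (p : ℝ × ℝ) : circleFrame f p = WithLp.toLp 2 (f.symm p) :=
  rfl

lemma circleFrame_sub (p q : ℝ × ℝ) :
    circleFrame f p - circleFrame f q = WithLp.toLp 2 (f.symm.linear (p - q)) :=
  ((circleFrame f).toAffineMap.linearMap_vsub p q).symm

lemma image_circleFrame_image_unitCircle :
    circleFrame f '' (f '' unitCircle) = sphere 0 1 := by
  rw [Set.image_image, ← image_toLp_unitCircle]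
  simp

lemma InscribedEllipse.isInscribed_sphere {f : (ℝ × ℝ) ≃ᵃ[ℝ] (ℝ × ℝ)}
    (hf : InscribedEllipse f A₁ A₂ A₃ A₄) :
    IsInscribed (sphere 0 1)
      (circleFrame f A₁) (circleFrame f A₂) (circleFrame f A₃) (circleFrame f A₄) := by
  rw [← image_circleFrame_image_unitCircle f]
  exact (inscribedEllipse_iff.mp hf).image (circleFrame f).toAffineMap

lemma ConjugateDiameters.inner_circleFrame_eq_zero {f : (ℝ × ℝ) ≃ᵃ[ℝ] (ℝ × ℝ)} {k l : ℝ}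
    (h : ConjugateDiameters (f '' unitCircle) (f 0) (k • (A₃ - A₁)) (l • (A₄ - A₂))) :
    ⟪circleFrame f A₃ - circleFrame f A₁, circleFrame f A₄ - circleFrame f A₂⟫ = 0 := by
  have hk : k ≠ 0 := left_ne_zero_of_smul h.1
  have hl : l ≠ 0 := left_ne_zero_of_smul h.2.1
  have hcircle := h.map f.symm
  simp only [Set.image_image, AffineEquiv.symm_apply_apply, Set.image_id'] at hcircle
  have hperp := hcircle.inner_toLp_eq_zero
  rw [map_smul, map_smul, WithLp.toLp_smul, WithLp.toLp_smul, real_inner_smul_left,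
    real_inner_smul_right, ← circleFrame_sub, ← circleFrame_sub] at hperp
  simpa [hk, hl] using hperp

end CircleFrame

/-- If a convex quadrilateral is not a midpoint diagonal quadrilateral, then no
ellipse inscribed in it has a pair of conjugate diameters parallel to the two
diagonals. -/
theorem stmt15 (A₁ A₂ A₃ A₄ : ℝ × ℝ) (hconv : ConvexQuad A₁ A₂ A₃ A₄)
    (hmdq : ¬ IsMidpointDiagonalQuad A₁ A₂ A₃ A₄)
    (f : (ℝ × ℝ) ≃ᵃ[ℝ] (ℝ × ℝ)) (hf : InscribedEllipse f A₁ A₂ A₃ A₄)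
    (u v : ℝ × ℝ) (hu : ∃ k : ℝ, u = k • (A₃ - A₁)) (hv : ∃ k : ℝ, v = k • (A₄ - A₂)) :
    ¬ ConjugateDiameters (f '' unitCircle) (f 0) u v := by
  intro hcd
  obtain ⟨h₁₂₃, h₂₃₄, h₃₄₁, h₄₁₂, P, h₁₃, h₂₄⟩ := hconv
  obtain ⟨k, rfl⟩ := hu
  obtain ⟨l, rfl⟩ := hv
  set φ := circleFrame f
  have hmid := eq_midpoint_or_eq_midpoint_of_isInscribed (h₁₂₃.map_affineEquiv₃ φ)
    (h₂₃₄.map_affineEquiv₃ φ) (h₃₄₁.map_affineEquiv₃ φ) (h₄₁₂.map_affineEquiv₃ φ)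
    (image_openSegment ℝ φ.toAffineMap A₁ A₃ ▸ Set.mem_image_of_mem φ h₁₃)
    (image_openSegment ℝ φ.toAffineMap A₂ A₄ ▸ Set.mem_image_of_mem φ h₂₄)
    hf.isInscribed_sphere hcd.inner_circleFrame_eq_zero
  refine hmdq ⟨P, h₁₃, h₂₄, ?_⟩
  simpa only [← φ.map_midpoint, φ.injective.eq_iff] using hmid
end

section
/- Let s, v > 0, t > w, s ≠ v, and let Q_{s,t,v,w} be the quadrilateral with vertices (0,0), (0,1), (s,t), (v,w). Then Q_{s,t,v,w} is a type 1 midpoint diagonal quadrilateral (the diagonals meet at the midpoint of the diagonal from (0,1) to (v,w)) if and only if vt = (w+1)s, and is a type 2 midpoint diagonal quadrilateral (the diagonals meet at the midpoint of the diagonal from (0,0) to (s,t)) if and only if (t−2)v = (w−1)s. -/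
/-!
The midpoint of a diagonal always lies on that diagonal, so each type condition says only that
this midpoint lies on the other diagonal. Neither diagonal is vertical (`s, v > 0`), so that is
the line equation through the diagonal together with the abscissa lying strictly between its
endpoints; under the line equation, `f₁ > 0` resp. `f₂ > 0` is exactly that range condition.
-/

open Set

theorem Prod.mem_openSegment_iff_of_fst_lt {a b p : ℝ × ℝ} (hab : a.1 < b.1) :
    p ∈ openSegment ℝ a b ↔
      p.1 ∈ Ioo a.1 b.1 ∧ (p.2 - a.2) * (b.1 - a.1) = (p.1 - a.1) * (b.2 - a.2) := by
  have hd : 0 < b.1 - a.1 := sub_pos.2 hab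
  rw [openSegment_eq_image']
  constructor
  · rintro ⟨θ, ⟨hθ₀, hθ₁⟩, rfl⟩
    simp only [Prod.fst_add, Prod.snd_add, Prod.smul_fst, Prod.smul_snd, Prod.fst_sub,
      Prod.snd_sub, smul_eq_mul, mem_Ioo]
    exact ⟨⟨by nlinarith, by nlinarith⟩, by ring⟩
  · rintro ⟨⟨h₁, h₂⟩, hline⟩
    refine ⟨(p.1 - a.1) / (b.1 - a.1), ⟨by bound, (div_lt_one hd).2 (by linarith)⟩, ?_⟩
    ext
    · simp only [Prod.fst_add, Prod.smul_fst, Prod.fst_sub, smul_eq_mul]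
      field_simp
      ring
    · simp only [Prod.snd_add, Prod.smul_snd, Prod.snd_sub, smul_eq_mul]
      field_simp
      linear_combination -hline

theorem Prod.midpoint_mk (a b c d : ℝ) :
    midpoint ℝ (a, b) (c, d) = ((a + c) / 2, (b + d) / 2) := by
  ext <;>
    simp only [midpoint_eq_smul_add, Prod.mk_add_mk, Prod.smul_mk, smul_eq_mul, invOf_eq_inv] <;>
    ring

theorem stmt16_general (s t v w : ℝ) (hs : 0 < s) (hv : 0 < v)
    (hf1 : 0 < v * (t - 1) + (1 - w) * s) (hf2 : 0 < v * t - w * s) :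
    -- type 1: diagonals meet at the midpoint of the diagonal from (0,1) to (v,w)
    ((∃ P : ℝ × ℝ, P ∈ openSegment ℝ ((0 : ℝ), (0 : ℝ)) ((s, t) : ℝ × ℝ) ∧
        P ∈ openSegment ℝ ((0 : ℝ), (1 : ℝ)) ((v, w) : ℝ × ℝ) ∧
        P = midpoint ℝ ((0 : ℝ), (1 : ℝ)) ((v, w) : ℝ × ℝ)) ↔ v * t = (w + 1) * s) ∧
    -- type 2: diagonals meet at the midpoint of the diagonal from (0,0) to (s,t)
    ((∃ P : ℝ × ℝ, P ∈ openSegment ℝ ((0 : ℝ), (0 : ℝ)) ((s, t) : ℝ × ℝ) ∧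
        P ∈ openSegment ℝ ((0 : ℝ), (1 : ℝ)) ((v, w) : ℝ × ℝ) ∧
        P = midpoint ℝ ((0 : ℝ), (0 : ℝ)) ((s, t) : ℝ × ℝ)) ↔ (t - 2) * v = (w - 1) * s) := by
  simp only [exists_eq_right_right, midpoint_mem_openSegment, and_true, true_and]
  rw [Prod.mem_openSegment_iff_of_fst_lt hs, Prod.mem_openSegment_iff_of_fst_lt hv,
    Prod.midpoint_mk, Prod.midpoint_mk]
  simp only [mem_Ioo]
  constructor
  · constructor
    · rintro ⟨-, hline⟩
      linarith
    · intro h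
      exact ⟨⟨by linarith, by linarith⟩, by linarith⟩
  · constructor
    · rintro ⟨-, hline⟩
      linarith
    · intro h
      exact ⟨⟨by linarith, by linarith⟩, by linarith⟩

theorem stmt16 (s t v w : ℝ) (hs : 0 < s) (hv : 0 < v) (htw : w < t) (hsv : s ≠ v)
    (hf1 : 0 < v * (t - 1) + (1 - w) * s) (hf2 : 0 < v * t - w * s)
    (hf3 : w * s - v * (t - 1) ≠ 0) :
    -- type 1: diagonals meet at the midpoint of the diagonal from (0,1) to (v,w)
    ((∃ P : ℝ × ℝ, P ∈ openSegment ℝ ((0 : ℝ), (0 : ℝ)) ((s, t) : ℝ × ℝ) ∧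
        P ∈ openSegment ℝ ((0 : ℝ), (1 : ℝ)) ((v, w) : ℝ × ℝ) ∧
        P = midpoint ℝ ((0 : ℝ), (1 : ℝ)) ((v, w) : ℝ × ℝ)) ↔ v * t = (w + 1) * s) ∧
    -- type 2: diagonals meet at the midpoint of the diagonal from (0,0) to (s,t)
    ((∃ P : ℝ × ℝ, P ∈ openSegment ℝ ((0 : ℝ), (0 : ℝ)) ((s, t) : ℝ × ℝ) ∧
        P ∈ openSegment ℝ ((0 : ℝ), (1 : ℝ)) ((v, w) : ℝ × ℝ) ∧
        P = midpoint ℝ ((0 : ℝ), (0 : ℝ)) ((s, t) : ℝ × ℝ)) ↔ (t - 2) * v = (w - 1) * s) :=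
  stmt16_general s t v w hs hv hf1 hf2
end
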